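/- Let M be a simple matroid with Cremona basis b and let F be a connected flat of M. Then the support graph G_b(F) is connected. -/

import Mathlib

open Set

variable {α : Type*}

/-- The set of non-basis elements on the line through `x` and `y`. -/
def Fij (M : Matroid α) (x y : α) : Set α := M.closure {x, y} \ {x, y}

/-- `b` is a Cremona basis: a base of `M` such that the sets
`Fij = cl{bᵢ,bⱼ} \ {bᵢ,bⱼ}` are pairwise disjoint with union `M.E \ b`. -/
def IsCremonaBasis (M : Matroid α) (b : Set α) : Prop :=
  M.IsBase b ∧
  (∀ x ∈ b, ∀ y ∈ b, ∀ x' ∈ b, ∀ y' ∈ b, x ≠ y → x' ≠ y' →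
    ({x, y} : Set α) ≠ {x', y'} → Disjoint (Fij M x y) (Fij M x' y')) ∧
  (⋃ x ∈ b, ⋃ y ∈ b, ⋃ _ : x ≠ y, Fij M x y) = M.E \ b

/-- The `b`-support of a set `S`. -/
def suppb (M : Matroid α) (b S : Set α) : Set α :=
  (b ∩ S) ∪ ⋃ x ∈ b, ⋃ y ∈ b, ⋃ _ : x ≠ y, ⋃ _ : (S ∩ Fij M x y).Nonempty, ({x, y} : Set α)

/-- Adjacency in the support graph `G_b(S)`: there is an edge between `x` and `y`
for each element of `S ∩ Fij M x y`. -/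
def Adjb (M : Matroid α) (b S : Set α) (x y : α) : Prop :=
  x ∈ b ∧ y ∈ b ∧ x ≠ y ∧ (S ∩ Fij M x y).Nonempty

/-- The support graph `G_b(S)` is connected. -/
def SuppConnected (M : Matroid α) (b S : Set α) : Prop :=
  ∀ x ∈ suppb M b S, ∀ y ∈ suppb M b S, Relation.ReflTransGen (Adjb M b S) x y

/-- The vertex set of the connected component of `x` in the support graph `G_b(S)`. -/
def compOf (M : Matroid α) (b S : Set α) (x : α) : Set α :=
  {y ∈ suppb M b S | Relation.ReflTransGen (Adjb M b S) x y}

/-- A matroid is simple if every pair of (not necessarily distinct) elements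
of the ground set is independent. -/
def MSimple (M : Matroid α) : Prop := ∀ e ∈ M.E, ∀ f ∈ M.E, M.Indep {e, f}

/-- A circuit: a minimal dependent set. -/
def MCircuit (M : Matroid α) (C : Set α) : Prop :=
  C ⊆ M.E ∧ ¬ M.Indep C ∧ ∀ x ∈ C, M.Indep (C \ {x})

/-- A matroid is connected if its ground set is nonempty and every two distinct
elements lie on a common circuit. -/
def MConnected (M : Matroid α) : Prop :=
  M.E.Nonempty ∧ ∀ e ∈ M.E, ∀ f ∈ M.E, e = f ∨ ∃ C, MCircuit M C ∧ e ∈ C ∧ f ∈ C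

/-- The rank of a set in a matroid: the supremum of cardinalities of independent subsets. -/
noncomputable def mRank (M : Matroid α) (X : Set α) : ℕ :=
  sSup {n | ∃ I, M.Indep I ∧ I ⊆ X ∧ I.ncard = n}

/-!
Let `A` be the vertex set of the component of `x` in `G_b(F)`. Every element of `F` outside `b`
lies on a line `cl{bᵢ, bⱼ}` spanned by an edge of `G_b(F)`, so `F ⊆ cl A ∪ cl (b \ A)`; if some
`y` of the support lies outside `A`, both parts contain elements of `F` not in the other one.
Since `A ∪ (b \ A) = b` is independent, the flats `cl A` and `cl (b \ A)` are skew: independent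
subsets of them have independent union. Hence a circuit covered by the two flats lies in one of
them, and no circuit of `M|F` can contain elements from both parts, contradicting connectivity.
-/

namespace Matroid

variable {M : Matroid α} {A B C K : Set α}

theorem Indep.union_indep_of_subset_closure (hAB : M.Indep (A ∪ B)) (hdisj : Disjoint A B)
    (hK : M.Indep K) (hKB : K ⊆ M.closure B) : M.Indep (A ∪ K) := by
  rw [(hAB.subset subset_union_left).union_indep_iff_forall_notMem_closure_left hK]
  rintro e ⟨heA, -⟩ hecl
  have heB : e ∉ B := hdisj.notMem_of_mem_left heA
  have hB : B ⊆ (A ∪ B) \ {e} := subset_sdiff_singleton subset_union_right heB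
  have hsub : A \ {e} ∪ K ⊆ M.closure ((A ∪ B) \ {e}) :=
    union_subset
      (M.subset_closure_of_subset' (sdiff_subset_sdiff_left subset_union_left)
        (sdiff_subset.trans (subset_union_left.trans hAB.subset_ground)))
      (hKB.trans (M.closure_subset_closure hB))
  exact hAB.notMem_closure_sdiff_of_mem (Or.inl heA)
    (M.closure_subset_closure_of_subset_closure hsub hecl)

theorem IsCircuit.subset_closure_or_subset_closure (hC : M.IsCircuit C) (hAB : M.Indep (A ∪ B))
    (hdisj : Disjoint A B) (hCAB : C ⊆ M.closure A ∪ M.closure B) :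
    C ⊆ M.closure A ∨ C ⊆ M.closure B := by
  by_contra! ⟨hCA, hCB⟩
  obtain ⟨e, heC, heB⟩ := not_subset.1 hCB
  have heA : e ∈ M.closure A := (hCAB heC).resolve_right heB
  have hinA : M.Indep (C ∩ M.closure A) := hC.ssubset_indep (inter_ssubset_left_iff.2 hCA)
  have houtA : M.Indep (C \ M.closure A) :=
    hC.ssubset_indep (sdiff_ssubset_left_iff.2 ⟨e, heC, heA⟩)
  have houtA_sub : C \ M.closure A ⊆ M.closure B :=
    fun f ⟨hfC, hfA⟩ ↦ (hCAB hfC).resolve_left hfA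
  have houtA_disj : Disjoint (C \ M.closure A) A :=
    disjoint_sdiff_left.mono_right (M.subset_closure A (hAB.subset subset_union_left).subset_ground)
  have h₁ : M.Indep (A ∪ (C \ M.closure A)) :=
    hAB.union_indep_of_subset_closure hdisj houtA houtA_sub
  have h₂ : M.Indep ((C \ M.closure A) ∪ (C ∩ M.closure A)) :=
    (union_comm _ _ ▸ h₁).union_indep_of_subset_closure houtA_disj hinA inter_subset_right
  exact hC.not_indep (sdiff_union_inter C _ ▸ h₂)

end Matroid

open Matroid

section SupportGraph

variable {M : Matroid α} {b S T : Set α}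

theorem mCircuit_iff_isCircuit {C : Set α} : MCircuit M C ↔ M.IsCircuit C := by
  rw [isCircuit_iff_dep_forall_sdiff_singleton_indep, Dep, MCircuit]
  tauto

theorem MSimple.notMem_closure_empty (hs : MSimple M) {e : α} (he : e ∈ M.E) :
    e ∉ M.closure ∅ := by
  have hind : M.Indep {e} := pair_eq_singleton e ▸ hs e he e he
  exact (indep_singleton.1 hind).not_isLoop

theorem Adjb.symm {x y : α} (h : Adjb M b S x y) : Adjb M b S y x := by
  obtain ⟨hx, hy, hxy, hne⟩ := h
  exact ⟨hy, hx, hxy.symm, by rwa [Fij, pair_comm]⟩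

theorem Adjb.right_mem_suppb {x y : α} (h : Adjb M b S x y) : y ∈ suppb M b S := by
  obtain ⟨hx, hy, hxy, hne⟩ := h
  refine Or.inr (mem_iUnion₂.2 ⟨x, hx, mem_iUnion₂.2 ⟨y, hy, ?_⟩⟩)
  simp only [mem_iUnion]
  exact ⟨hxy, hne, Or.inr rfl⟩

theorem suppb_subset : suppb M b S ⊆ b := by
  rintro z (⟨hz, -⟩ | hz)
  · exact hz
  · simp only [mem_iUnion] at hz
    obtain ⟨i, hi, j, hj, -, -, rfl | rfl⟩ := hz
    exacts [hi, hj]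

/-- `T` is a union of vertex sets of connected components of `G_b(S)`. -/
def AdjClosed (M : Matroid α) (b S T : Set α) : Prop :=
  ∀ ⦃i j⦄, Adjb M b S i j → (i ∈ T ↔ j ∈ T)

theorem compOf_adjClosed (x : α) : AdjClosed M b S (compOf M b S x) := by
  intro i j hij
  exact ⟨fun hi ↦ ⟨hij.right_mem_suppb, hi.2.tail hij⟩,
    fun hj ↦ ⟨hij.symm.right_mem_suppb, hj.2.tail hij.symm⟩⟩

theorem AdjClosed.diff (hT : AdjClosed M b S T) : AdjClosed M b S (b \ T) := by
  intro i j hij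
  simp only [mem_sdiff, hij.1, hij.2.1, hT hij, true_and]

theorem AdjClosed.subset_closure_union_closure_diff (hT : AdjClosed M b S T)
    (hb : IsCremonaBasis M b) (hSE : S ⊆ M.E) :
    S ⊆ M.closure T ∪ M.closure (b \ T) := by
  intro g hg
  by_cases hgb : g ∈ b
  · by_cases hgT : g ∈ T
    · exact Or.inl (M.mem_closure_of_mem' hgT (hSE hg))
    · exact Or.inr (M.mem_closure_of_mem' ⟨hgb, hgT⟩ (hSE hg))
  have hgE : g ∈ M.E \ b := ⟨hSE hg, hgb⟩
  rw [← hb.2.2] at hgE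
  simp only [mem_iUnion] at hgE
  obtain ⟨i, hi, j, hj, hij, hgij⟩ := hgE
  have hadj : Adjb M b S i j := ⟨hi, hj, hij, g, hg, hgij⟩
  by_cases hiT : i ∈ T
  · exact Or.inl (M.closure_subset_closure (pair_subset hiT ((hT hadj).1 hiT)) hgij.1)
  · have hjT : j ∉ T := fun hjT ↦ hiT ((hT hadj).2 hjT)
    have hij' : {i, j} ⊆ b \ T := pair_subset ⟨hi, hiT⟩ ⟨hj, hjT⟩
    exact Or.inr (M.closure_subset_closure hij' hgij.1)

theorem AdjClosed.exists_mem_closure_notMem_closure_diff (hT : AdjClosed M b S T)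
    (hs : MSimple M) (hb : M.Indep b) (hSE : S ⊆ M.E) (hTb : T ⊆ b) {z : α}
    (hz : z ∈ suppb M b S) (hzT : z ∈ T) :
    ∃ e ∈ S, e ∈ M.closure T ∧ e ∉ M.closure (b \ T) := by
  rcases hz with ⟨hzb, hzS⟩ | hz
  · refine ⟨z, hzS, M.mem_closure_of_mem' hzT (hSE hzS), fun hcl ↦ ?_⟩
    have hsub : b \ T ⊆ b \ {z} := sdiff_subset_sdiff_right (singleton_subset_iff.2 hzT)
    exact hb.notMem_closure_sdiff_of_mem hzb (M.closure_subset_closure hsub hcl)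
  simp only [mem_iUnion] at hz
  obtain ⟨i, hi, j, hj, hij, ⟨e, heS, heij⟩, hzij⟩ := hz
  have hadj : Adjb M b S i j := ⟨hi, hj, hij, e, heS, heij⟩
  have hiT : i ∈ T := by
    rcases hzij with rfl | rfl
    exacts [hzT, (hT hadj).2 hzT]
  have heT : e ∈ M.closure T :=
    M.closure_subset_closure (pair_subset hiT ((hT hadj).1 hiT)) heij.1
  refine ⟨e, heS, heT, fun hcl ↦ hs.notMem_closure_empty (hSE heS) ?_⟩
  have hskew := (union_sdiff_cancel hTb ▸ hb).closure_inter_eq_inter_closure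
  rw [inter_sdiff_self] at hskew
  exact hskew ▸ ⟨heT, hcl⟩

end SupportGraph

theorem MConnected.exists_isCircuit_of_restrict {M : Matroid α} {F : Set α} (hFE : F ⊆ M.E)
    (h : MConnected (M ↾ F)) {e f : α} (he : e ∈ F) (hf : f ∈ F) (hef : e ≠ f) :
    ∃ C, M.IsCircuit C ∧ C ⊆ F ∧ e ∈ C ∧ f ∈ C := by
  obtain ⟨C, hC, heC, hfC⟩ := (h.2 e he f hf).resolve_left hef
  rw [mCircuit_iff_isCircuit, restrict_isCircuit_iff hFE] at hC
  exact ⟨C, hC.1, hC.2, heC, hfC⟩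

theorem stmt6_general (M : Matroid α) (hsimple : MSimple M)
    (b : Set α) (hb : IsCremonaBasis M b)
    (F : Set α) (hF : M.IsFlat F) (hFconn : MConnected (M.restrict F)) :
    SuppConnected M b F := by
  intro x hx y hy
  by_contra hxy
  set A := compOf M b F x
  have hA : AdjClosed M b F A := compOf_adjClosed x
  have hAb : A ⊆ b := fun z hz ↦ suppb_subset hz.1
  have hyA : y ∈ b \ A := ⟨suppb_subset hy, fun h ↦ hxy h.2⟩
  obtain ⟨e, heF, heA, heA'⟩ := hA.exists_mem_closure_notMem_closure_diff hsimple hb.1.indep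
    hF.subset_ground hAb hx ⟨hx, .refl⟩
  obtain ⟨f, hfF, -, hfA⟩ := hA.diff.exists_mem_closure_notMem_closure_diff hsimple
    hb.1.indep hF.subset_ground sdiff_subset hy hyA
  rw [sdiff_sdiff_cancel_left hAb] at hfA
  obtain ⟨C, hC, hCF, heC, hfC⟩ := hFconn.exists_isCircuit_of_restrict hF.subset_ground heF hfF
    (by rintro rfl; exact hfA heA)
  have hCcover := hCF.trans (hA.subset_closure_union_closure_diff hb hF.subset_ground)
  have hAb' : M.Indep (A ∪ (b \ A)) := by rw [union_sdiff_cancel hAb]; exact hb.1.indep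
  rcases hC.subset_closure_or_subset_closure hAb' disjoint_sdiff_right hCcover with hCA | hCA'
  · exact hfA (hCA hfC)
  · exact heA' (hCA' heC)

/-- Every connected flat of a simple matroid with a Cremona basis is
support-connected. -/
theorem stmt6 (M : Matroid α) (hfin : M.E.Finite) (hsimple : MSimple M)
    (b : Set α) (hb : IsCremonaBasis M b)
    (F : Set α) (hF : M.IsFlat F) (hFconn : MConnected (M.restrict F)) :
    SuppConnected M b F :=
  stmt6_general M hsimple b hb F hF hFconn
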